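/- Let f, m, s, b, θ be real numbers with s ≥ 0, b ≥ 0, and m − b·s ≤ f ≤ m + b·s. Define u = m + b·s, l = m − b·s, and define loss = (θ − f) if m ≥ θ and f < θ, loss = (f − θ) if m < θ and f ≥ θ, and loss = 0 otherwise. Then loss ≤ max(min(u − θ, θ − l), 0). -/
import Mathlib

/-- Pointwise bound of the misclassification loss by the truncated straddle value:
if `m - b·s ≤ f ≤ m + b·s` with `s, b ≥ 0`, then the misclassification loss
(for classification by the sign of `m - θ`) is at most
`max(min(ucb - θ, θ - lcb), 0)` where `ucb = m + b·s` and `lcb = m - b·s`. -/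
theorem stmt_8 (f m s b θ : ℝ) (hs : 0 ≤ s) (hb : 0 ≤ b)
    (hlow : m - b * s ≤ f) (hhigh : f ≤ m + b * s)
    (u l loss : ℝ) (hu : u = m + b * s) (hl : l = m - b * s)
    (hloss : loss = if θ ≤ m ∧ f < θ then θ - f
      else if m < θ ∧ θ ≤ f then f - θ else 0) :
    loss ≤ max (min (u - θ) (θ - l)) 0 := by
  subst hu hl hloss
  split_ifs with h1 h2
  · refine le_max_of_le_left (le_min ?_ ?_) <;> linarith [h1.1, h1.2]
  · refine le_max_of_le_left (le_min ?_ ?_) <;> linarith [h2.1, h2.2]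
  · exact le_max_right _ _
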